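/- arXiv:2401.12740 — 4 statements merged into one kernel-verified Lean document; each statement's English description precedes it below -/
import Mathlib

section
/- Let P be a finite partial order with a chosen local precedence order at each element, and let Q be a subset of P, viewed as an induced subposet, such that for every x ∈ Q all upper covers of x in P belong to Q (so that the cover relation of Q is the restriction of that of P, and the local precedence orders of P restrict to local precedence orders on Q). If L is a consistent MRO for P, then the restriction of L to Q is a consistent MRO for Q with respect to the restricted local precedence orders. -/
/-- A choice of a *local precedence order* at every element of a partial order:
`ℓ C B A` means that `B` precedes `A` in the local precedence order at `C`.
For every `C`, `ℓ C` must be a strict linear order on the set of upper covers of `C`. -/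
def IsLocalPrecedenceChoice {α : Type*} [PartialOrder α] (ℓ : α → α → α → Prop) : Prop :=
  ∀ C : α,
    (∀ B A, ℓ C B A → C ⋖ B ∧ C ⋖ A) ∧
    (∀ A, ¬ ℓ C A A) ∧
    (∀ A B D, ℓ C A B → ℓ C B D → ℓ C A D) ∧
    (∀ A B, C ⋖ A → C ⋖ B → A ≠ B → ℓ C A B ∨ ℓ C B A)

/-- `L` is a *consistent MRO* for the partial order with respect to the choice `ℓ` of local
precedence orders; `L x y` means that `x` precedes `y` in the MRO `L`.  The conditions are:
`L` is a (strict) linear order, `L` is a linear extension of the partial order, and for every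
element `C`, every pair of upper covers `A`, `B` of `C` such that `B` precedes `A` in `ℓ C`,
and every `B'` with `B' ≥ B` but not `B' ≥ A`, the element `B'` precedes `A` in `L`. -/
def IsConsistentMRO {α : Type*} [PartialOrder α] (ℓ : α → α → α → Prop)
    (L : α → α → Prop) : Prop :=
  IsStrictTotalOrder α L ∧
  (∀ x y : α, x < y → L x y) ∧
  (∀ C A B : α, C ⋖ A → C ⋖ B → ℓ C B A → ∀ B' : α, B ≤ B' → ¬ A ≤ B' → L B' A)

/-- Let `Q` be a subset of a finite partial order, viewed as an induced subposet, which is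
closed under taking upper covers.  Then the local precedence orders restrict to local
precedence orders on `Q`, and the restriction of any consistent MRO is a consistent MRO
for `Q` with respect to the restricted local precedence orders. -/
theorem consistentMRO_restrict {α : Type*} [PartialOrder α] [Fintype α] (Q : Set α)
    (hQ : ∀ x ∈ Q, ∀ y : α, x ⋖ y → y ∈ Q)
    (ℓ : α → α → α → Prop) (hℓ : IsLocalPrecedenceChoice ℓ)
    (L : α → α → Prop) (hL : IsConsistentMRO ℓ L) :
    IsLocalPrecedenceChoice (fun C B A : Q => ℓ (C : α) (B : α) (A : α)) ∧
    IsConsistentMRO (fun C B A : Q => ℓ (C : α) (B : α) (A : α))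
      (fun x y : Q => L (x : α) (y : α)) := by
  have covQ : ∀ (C A : Q), C ⋖ A ↔ (C : α) ⋖ (A : α) := by
    intro C A
    constructor
    · rintro ⟨hlt, hno⟩
      have hlt' : (C : α) < A := hlt
      obtain ⟨z, hz, hzA⟩ := exists_covBy_le_of_lt hlt'
      have hzQ : z ∈ Q := hQ C C.2 z hz
      rcases eq_or_lt_of_le hzA with rfl | hzA'
      · exact hz
      · exact absurd hzA' (hno (show C < (⟨z, hzQ⟩ : Q) from hz.1))
    · rintro ⟨hlt, hno⟩
      exact ⟨hlt, fun b hb hb' => hno hb hb'⟩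
  have hlpc : IsLocalPrecedenceChoice (fun C B A : Q => ℓ (C : α) (B : α) (A : α)) := by
    intro C
    obtain ⟨h1, h2, h3, h4⟩ := hℓ (C : α)
    refine ⟨fun B A h => ?_, fun A => h2 A, fun A B D hab hbd => h3 _ _ _ hab hbd,
      fun A B hCA hCB hne => h4 _ _ ((covQ C A).1 hCA) ((covQ C B).1 hCB) (by
        simpa [Subtype.ext_iff] using hne)⟩
    obtain ⟨hB, hA⟩ := h1 _ _ h
    exact ⟨(covQ C B).2 hB, (covQ C A).2 hA⟩
  refine ⟨hlpc, ?_⟩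
  obtain ⟨hsto, hext, hmono⟩ := hL
  refine ⟨{ irrefl := fun a => hsto.irrefl a,
            trans := fun a b c => hsto.trans _ _ _,
            trichotomous := fun a b => ?_ }, fun x y h => hext x y h, ?_⟩
  · intro h1 h2
    exact Subtype.ext (hsto.trichotomous (a : α) b h1 h2)
  · intro C A B hCA hCB hBA B' hBB' hAB'
    exact hmono (C : α) A B ((covQ C A).1 hCA) ((covQ C B).1 hCB) hBA B' hBB'
      (fun h => hAB' h)
end

section
/- Let n ≥ 1 and let P be a partial order on {1, …, n−1} admitting the natural order 1 < 2 < ⋯ < n−1 as a linear extension. Then the map sending an antichain S of P to the partial order on {1, …, n} generated by the relations of P together with the relations s < n for s ∈ S is a bijection from the set of antichains of P onto the set of partial orders Q on {1, …, n} such that the restriction of Q to {1, …, n−1} equals P and the natural order 1 < 2 < ⋯ < n is a linear extension of Q. Moreover, under this bijection the set of lower covers of n in the resulting poset is exactly the antichain S. -/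
/-- Given a strict partial order `P` on `Fin n` and a set `S ⊆ Fin n`, the strict partial
order on `Fin (n + 1)` generated by the relations of `P` (transported along `Fin.castSucc`)
together with the relations `s < Fin.last n` for `s ∈ S`.  Here `Fin (n + 1)` plays the role
of `{1, …, n+1}` with `Fin.last n` as its largest new element. -/
def extendByAntichain {n : ℕ} (P : Fin n → Fin n → Prop) (S : Set (Fin n)) :
    Fin (n + 1) → Fin (n + 1) → Prop :=
  Relation.TransGen fun i j =>
    (∃ i' j' : Fin n, i = Fin.castSucc i' ∧ j = Fin.castSucc j' ∧ P i' j') ∨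
    (∃ s ∈ S, i = Fin.castSucc s ∧ j = Fin.last n)

section aux

variable {n : ℕ} {P : Fin n → Fin n → Prop} {S : Set (Fin n)}

private lemma ext_char (htrans : Transitive P) {i j : Fin (n + 1)}
    (h : extendByAntichain P S i j) :
    (∃ i' j' : Fin n, i = Fin.castSucc i' ∧ j = Fin.castSucc j' ∧ P i' j') ∨
    (j = Fin.last n ∧ ∃ i' : Fin n, i = Fin.castSucc i' ∧ (i' ∈ S ∨ ∃ t ∈ S, P i' t)) := by
  induction h with
  | single h =>
    rcases h with ⟨i', j', hi, hj, hp⟩ | ⟨s, hs, hi, hj⟩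
    · exact Or.inl ⟨i', j', hi, hj, hp⟩
    · exact Or.inr ⟨hj, s, hi, Or.inl hs⟩
  | tail h1 h2 ih =>
    rcases h2 with ⟨b', c', hb, hc, hp⟩ | ⟨s, hs, hb, hc⟩
    · rcases ih with ⟨i', j', hi, hj, hp'⟩ | ⟨hj, -⟩
      · have hj' : j' = b' := Fin.castSucc_injective n (hj ▸ hb)
        exact Or.inl ⟨i', c', hi, hc, htrans hp' (hj' ▸ hp)⟩
      · exact absurd (hb ▸ hj) (Fin.castSucc_lt_last b').ne
    · rcases ih with ⟨i', j', hi, hj, hp'⟩ | ⟨hj, -⟩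
      · have hj' : j' = s := Fin.castSucc_injective n (hj ▸ hb)
        exact Or.inr ⟨hc, i', hi, Or.inr ⟨s, hs, hj' ▸ hp'⟩⟩
      · exact absurd (hb ▸ hj) (Fin.castSucc_lt_last s).ne

private lemma ext_lt (hPnat : ∀ i j : Fin n, P i j → i < j) {i j : Fin (n + 1)}
    (h : extendByAntichain P S i j) : i < j := by
  induction h with
  | single h =>
    rcases h with ⟨i', j', hi, hj, hp⟩ | ⟨s, hs, hi, hj⟩
    · subst hi; subst hj; exact Fin.castSucc_lt_castSucc_iff.mpr (hPnat _ _ hp)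
    · subst hi; subst hj; exact Fin.castSucc_lt_last s
  | tail _ h2 ih =>
    refine lt_trans ih ?_
    rcases h2 with ⟨i', j', hi, hj, hp⟩ | ⟨s, hs, hi, hj⟩
    · subst hi; subst hj; exact Fin.castSucc_lt_castSucc_iff.mpr (hPnat _ _ hp)
    · subst hi; subst hj; exact Fin.castSucc_lt_last s

private lemma ext_of_P {i j : Fin n} (h : P i j) :
    extendByAntichain P S (Fin.castSucc i) (Fin.castSucc j) :=
  Relation.TransGen.single (Or.inl ⟨i, j, rfl, rfl, h⟩)

private lemma ext_of_mem {s : Fin n} (hs : s ∈ S) :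
    extendByAntichain P S (Fin.castSucc s) (Fin.last n) :=
  Relation.TransGen.single (Or.inr ⟨s, hs, rfl, rfl⟩)

/-- The lower-cover characterisation of membership in `S`. -/
private lemma mem_iff_cover (hP : IsStrictOrder (Fin n) P) (hS : IsAntichain P S)
    (s : Fin n) :
    s ∈ S ↔
      (extendByAntichain P S (Fin.castSucc s) (Fin.last n) ∧
        ¬ ∃ z : Fin (n + 1), extendByAntichain P S (Fin.castSucc s) z ∧
          extendByAntichain P S z (Fin.last n)) := by
  have htrans : Transitive P := fun a b c => hP.toIsTrans.trans a b c
  have hirr : ∀ a, ¬ P a a := hP.toIrrefl.irrefl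
  constructor
  · intro hs
    refine ⟨ext_of_mem hs, ?_⟩
    rintro ⟨z, h1, h2⟩
    rcases ext_char htrans h2 with ⟨z', j', hz, hj, hp⟩ | ⟨-, z', hz, hz'⟩
    · exact absurd hj.symm (Fin.castSucc_lt_last j').ne
    · subst hz
      rcases ext_char htrans h1 with ⟨s1, z1, hs1, hz1, hp1⟩ | ⟨hlast, -⟩
      · have hs1' : s1 = s := Fin.castSucc_injective n hs1.symm
        have hz1' : z1 = z' := Fin.castSucc_injective n hz1.symm
        rw [hs1', hz1'] at hp1
        rcases hz' with hmem | ⟨t, ht, hpt⟩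
        · have hne : s ≠ z' := fun h => hirr s (h ▸ hp1)
          exact hS hs hmem hne hp1
        · have hst : P s t := htrans hp1 hpt
          by_cases hts : s = t
          · have hzs : P z' s := by rw [hts]; exact hpt
            exact hirr s (htrans hp1 hzs)
          · exact hS hs ht hts hst
      · exact absurd hlast (Fin.castSucc_lt_last z').ne
  · rintro ⟨h1, h2⟩
    rcases ext_char htrans h1 with ⟨s1, j', hs1, hj, hp⟩ | ⟨-, s1, hs1, hcase⟩
    · exact absurd hj.symm (Fin.castSucc_lt_last j').ne
    · have hs1' : s1 = s := Fin.castSucc_injective n hs1.symm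
      rw [hs1'] at hcase
      rcases hcase with hmem | ⟨t, ht, hpt⟩
      · exact hmem
      · exact absurd ⟨Fin.castSucc t, ext_of_P hpt, ext_of_mem ht⟩ h2

end aux

/-- Let `P` be a strict partial order on `Fin n` admitting the natural order as a linear
extension.  Then `S ↦ extendByAntichain P S` is a bijection from the antichains of `P` onto
the strict partial orders `Q` on `Fin (n + 1)` admitting the natural order as a linear
extension and restricting to `P` on `Fin n`; moreover, under this bijection the lower covers
of the new greatest index `Fin.last n` in the resulting order are exactly the elements
of the antichain `S`. -/
theorem extendByAntichain_bijOn {n : ℕ} (P : Fin n → Fin n → Prop)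
    (hP : IsStrictOrder (Fin n) P) (hPnat : ∀ i j : Fin n, P i j → i < j) :
    Set.BijOn (extendByAntichain P) {S : Set (Fin n) | IsAntichain P S}
      {Q : Fin (n + 1) → Fin (n + 1) → Prop | IsStrictOrder (Fin (n + 1)) Q ∧
        (∀ i j : Fin (n + 1), Q i j → i < j) ∧
        (∀ i j : Fin n, Q (Fin.castSucc i) (Fin.castSucc j) ↔ P i j)} ∧
    (∀ S : Set (Fin n), IsAntichain P S → ∀ s : Fin n,
      s ∈ S ↔
        (extendByAntichain P S (Fin.castSucc s) (Fin.last n) ∧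
          ¬ ∃ z : Fin (n + 1), extendByAntichain P S (Fin.castSucc s) z ∧
            extendByAntichain P S z (Fin.last n))) := by
  classical
  have htrans : Transitive P := fun a b c => hP.toIsTrans.trans a b c
  have hirr : ∀ a, ¬ P a a := hP.toIrrefl.irrefl
  refine ⟨⟨?maps, ?inj, ?surj⟩, fun S hS s => mem_iff_cover hP hS s⟩
  case maps =>
    intro S hS
    have hlt : ∀ i j, extendByAntichain P S i j → i < j := fun i j h => ext_lt hPnat h
    haveI : IsIrrefl (Fin (n + 1)) (extendByAntichain P S) :=
      ⟨fun a h => lt_irrefl a (hlt a a h)⟩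
    haveI : IsTrans (Fin (n + 1)) (extendByAntichain P S) :=
      ⟨fun a b c h1 h2 => h1.trans h2⟩
    refine ⟨⟨⟩, hlt, fun i j => ⟨fun h => ?_, ext_of_P⟩⟩
    rcases ext_char htrans h with ⟨i', j', hi, hj, hp⟩ | ⟨hlast, -⟩
    · obtain rfl : i' = i := (Fin.castSucc_injective n hi).symm
      obtain rfl : j' = j := (Fin.castSucc_injective n hj).symm
      exact hp
    · exact absurd hlast (Fin.castSucc_lt_last j).ne
  case inj =>
    intro S1 hS1 S2 hS2 heq
    ext s
    rw [mem_iff_cover hP hS1 s, mem_iff_cover hP hS2 s, heq]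
  case surj =>
    rintro Q ⟨hQ, hQnat, hQres⟩
    have hQtrans : Transitive Q := fun a b c => hQ.toIsTrans.trans a b c
    set S : Set (Fin n) :=
      {s | Q (Fin.castSucc s) (Fin.last n) ∧
        ∀ z : Fin n, P s z → ¬ Q (Fin.castSucc z) (Fin.last n)} with hSdef
    have hSanti : IsAntichain P S := by
      intro s hs t ht hne hp
      exact hs.2 t hp ht.1
    refine ⟨S, hSanti, ?_⟩
    funext i j
    apply propext
    constructor
    · intro h
      induction h with
      | single h =>
        rcases h with ⟨i', j', hi, hj, hp⟩ | ⟨s, hs, hi, hj⟩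
        · subst hi; subst hj; exact (hQres i' j').mpr hp
        · subst hi; subst hj; exact hs.1
      | tail _ h2 ih =>
        refine hQtrans ih ?_
        rcases h2 with ⟨i', j', hi, hj, hp⟩ | ⟨s, hs, hi, hj⟩
        · subst hi; subst hj; exact (hQres i' j').mpr hp
        · subst hi; subst hj; exact hs.1
    · intro h
      rcases Fin.eq_castSucc_or_eq_last i with ⟨i', rfl⟩ | rfl
      · rcases Fin.eq_castSucc_or_eq_last j with ⟨j', rfl⟩ | rfl
        · exact ext_of_P ((hQres i' j').mp h)
        · -- Q (castSucc i') (last n); find maximal element above i'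
          set A : Finset (Fin n) :=
            Finset.univ.filter
              (fun z => (z = i' ∨ P i' z) ∧ Q (Fin.castSucc z) (Fin.last n)) with hA
          have hi'A : i' ∈ A := by simp [hA, h]
          obtain ⟨t, htA, hmax⟩ := A.exists_max_image id ⟨i', hi'A⟩
          simp only [hA, Finset.mem_filter, Finset.mem_univ, true_and] at htA
          have htS : t ∈ S := by
            refine ⟨htA.2, fun z hz hQz => ?_⟩
            have hzA : z ∈ A := by
              simp only [hA, Finset.mem_filter, Finset.mem_univ, true_and]
              refine ⟨?_, hQz⟩
              rcases htA.1 with rfl | hpt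
              · exact Or.inr hz
              · exact Or.inr (htrans hpt hz)
            exact absurd (hmax z hzA) (not_le.mpr (hPnat t z hz))
          rcases htA.1 with rfl | hpt
          · exact ext_of_mem htS
          · exact Relation.TransGen.tail (ext_of_P hpt) (Or.inr ⟨t, htS, rfl, rfl⟩)
      · exact absurd (hQnat _ _ h) (not_lt.mpr (Fin.le_last j))
end

section
/- Let L₁, L₂, …, L_k be duplicate-free lists over some type with decidable equality such that for every i ≥ 2 the list L_i is a sublist (subsequence, preserving relative order) of L₁. Then C3_merge applied to (L₁, …, L_k) succeeds and its output is L₁. -/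
/-- The graph of the `C3_merge` algorithm: `C3Merge ls M` holds exactly when `C3_merge`
applied to the sequence of lists `ls` succeeds with output `M`.

The algorithm repeatedly searches the current input lists, in order, for the first *good
head* (the head of one of the current lists which does not occur in the tail of any of the
current lists; this is implemented by `List.find?` on the list of heads), appends it to the
output and removes it from all input lists; it succeeds, returning the output, when all the
input lists are empty, and it fails when the lists are not all empty but no good head
exists. -/
inductive C3Merge {α : Type*} [DecidableEq α] : List (List α) → List α → Prop
  | done (ls : List (List α)) : (∀ l ∈ ls, l = []) → C3Merge ls []
  | step (ls : List (List α)) (a : α) (M : List α) :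
      (ls.filterMap List.head?).find? (fun b => decide (∀ l ∈ ls, b ∉ l.tail)) = some a →
      C3Merge (ls.map fun l => l.erase a) M →
      C3Merge ls (a :: M)


/-- If `L₁, …, Lₖ` are duplicate-free lists such that every list after the first is a
sublist (subsequence) of the first list `L₁`, then `C3_merge` applied to `(L₁, …, Lₖ)`
succeeds and its output is `L₁`. -/
theorem C3Merge_of_sublists {α : Type*} [DecidableEq α]
    (L₁ : List α) (rest : List (List α))
    (h₁ : L₁.Nodup) (hrest : ∀ L ∈ rest, List.Nodup L)
    (hsub : ∀ L ∈ rest, List.Sublist L L₁) :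
    C3Merge (L₁ :: rest) L₁ := by
  induction L₁ generalizing rest with
  | nil =>
    refine C3Merge.done _ ?_
    intro l hl
    rcases List.mem_cons.1 hl with rfl | h
    · rfl
    · exact List.sublist_nil.1 (hsub l h)
  | cons a t ih =>
    have ha : a ∉ t := (List.nodup_cons.1 h₁).1
    have hgood : ∀ l ∈ (a :: t) :: rest, a ∉ l.tail := by
      intro l hl
      rcases List.mem_cons.1 hl with rfl | h
      · exact ha
      · have hs := hsub l h
        have hn := hrest l h
        cases hs with
        | cons _ h' =>
          intro hmem
          exact ha (h'.subset (List.mem_of_mem_tail hmem))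
        | cons_cons _ h' =>
          intro hmem
          exact ha (h'.subset hmem)
    have hfind : (((a :: t) :: rest).filterMap List.head?).find?
        (fun b => decide (∀ l ∈ (a :: t) :: rest, b ∉ l.tail)) = some a := by
      have heq : ((a :: t) :: rest).filterMap List.head?
          = a :: rest.filterMap List.head? := by
        simp [List.filterMap_cons]
      rw [heq, List.find?_cons_of_pos]
      simpa using hgood
    refine C3Merge.step _ a t hfind ?_
    have herase : (((a :: t) :: rest).map fun l => l.erase a)
        = t :: rest.map (fun l => l.erase a) := by
      simp [List.erase_cons_head]
    rw [herase]
    refine ih _ (List.nodup_cons.1 h₁).2 ?_ ?_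
    · intro L hL
      rcases List.mem_map.1 hL with ⟨l, hl, rfl⟩
      exact (hrest l hl).erase a
    · intro L hL
      rcases List.mem_map.1 hL with ⟨l, hl, rfl⟩
      have := (hsub l hl).erase a
      rwa [List.erase_cons_head] at this
end

section
/- Let L₁, L₂, …, L_k be duplicate-free lists over some type with decidable equality, and suppose C3_merge applied to (L₁, …, L_k) succeeds with output M. Then M is duplicate-free, the set of elements of M equals the union of the sets of elements of L₁, …, L_k, and each L_i is a sublist (subsequence, preserving relative order) of M. -/
/-- If `C3_merge` applied to duplicate-free lists `L₁, …, Lₖ` succeeds with output `M`,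
then `M` is duplicate-free, the elements of `M` are exactly the elements of the union of
the `Lᵢ`, and every `Lᵢ` is a sublist (subsequence) of `M`. -/
theorem C3Merge_output_spec {α : Type*} [DecidableEq α]
    (ls : List (List α)) (hnd : ∀ l ∈ ls, List.Nodup l)
    (M : List α) (hM : C3Merge ls M) :
    M.Nodup ∧ (∀ a : α, a ∈ M ↔ ∃ l ∈ ls, a ∈ l) ∧ ∀ l ∈ ls, List.Sublist l M := by
  induction hM with
  | done ls h =>
    refine ⟨List.nodup_nil, fun a => ?_, fun l hl => ?_⟩
    · simp only [List.not_mem_nil, false_iff]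
      rintro ⟨l, hl, hal⟩
      rw [h l hl] at hal
      exact List.not_mem_nil hal
    · rw [h l hl]
  | step ls a M hfind hrec ih =>
    have hnd' : ∀ l ∈ ls.map (fun l => l.erase a), List.Nodup l := by
      intro l hl
      obtain ⟨l', hl', rfl⟩ := List.mem_map.mp hl
      exact (hnd l' hl').erase a
    obtain ⟨ihnd, ihmem, ihsub⟩ := ih hnd'
    have hpred : ∀ l ∈ ls, a ∉ l.tail := by
      have := List.find?_some hfind
      simpa using this
    have hmem : ∃ l ∈ ls, a ∈ l := by
      have := List.mem_of_find?_eq_some hfind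
      obtain ⟨l, hl, hh⟩ := List.mem_filterMap.mp this
      exact ⟨l, hl, List.mem_of_mem_head? hh⟩
    have haM : a ∉ M := by
      intro haM
      obtain ⟨l', hl', hal'⟩ := (ihmem a).mp haM
      obtain ⟨l, hl, rfl⟩ := List.mem_map.mp hl'
      exact ((hnd l hl).mem_erase_iff.mp hal').1 rfl
    refine ⟨List.nodup_cons.mpr ⟨haM, ihnd⟩, fun b => ?_, fun l hl => ?_⟩
    · constructor
      · intro hb
        rcases List.mem_cons.mp hb with rfl | hb
        · exact hmem
        · obtain ⟨l', hl', hbl'⟩ := (ihmem b).mp hb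
          obtain ⟨l, hl, rfl⟩ := List.mem_map.mp hl'
          exact ⟨l, hl, List.mem_of_mem_erase hbl'⟩
      · rintro ⟨l, hl, hbl⟩
        by_cases hba : b = a
        · exact hba ▸ (List.mem_cons_self : a ∈ a :: M)
        · refine List.mem_cons_of_mem a ((ihmem b).mpr ?_)
          exact ⟨l.erase a, List.mem_map_of_mem hl, (hnd l hl).mem_erase_iff.mpr ⟨hba, hbl⟩⟩
    · have hsub : List.Sublist (l.erase a) M :=
        ihsub (l.erase a) (List.mem_map_of_mem hl)
      by_cases hal : a ∈ l
      · obtain ⟨h, t, rfl⟩ : ∃ h t, l = h :: t := by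
          cases l with
          | nil => exact absurd hal List.not_mem_nil
          | cons h t => exact ⟨h, t, rfl⟩
        have : a = h := by
          rcases List.mem_cons.mp hal with rfl | hat
          · rfl
          · exact absurd hat (hpred _ hl)
        subst this
        rw [List.erase_cons_head] at hsub
        exact hsub.cons₂ a
      · rw [List.erase_of_not_mem hal] at hsub
        exact hsub.cons a
end
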